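/- arXiv:2404.07184 — 2 statements merged into one kernel-verified Lean document; each statement's English description precedes it below -/
import Mathlib

section
/- The moment cosheaf over a framework (G,p) in ℝ² is isomorphic to the constant cosheaf with stalk ℝ³: there exist linear isomorphisms at each vertex and edge stalk commuting with the cosheaf maps, hence H₁M ≅ (H₁G)³ and H₀M ≅ (H₀G)³. -/
open Module Function

/-- The wedge product of two vectors in `ℝ²`, identifying `⋀²ℝ²` with `ℝ`. -/
def wedge (F d : Fin 2 → ℝ) : ℝ := F 0 * d 1 - F 1 * d 0

/-- Transport of a force-couple `(M, F) ∈ ⋀²ℝ² ⊕ ℝ²` along a lever arm `d`: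
the stalk maps of the moment cosheaf. -/
def T (d : Fin 2 → ℝ) (x : ℝ × (Fin 2 → ℝ)) : ℝ × (Fin 2 → ℝ) :=
  (x.1 + wedge x.2 d, x.2)

/-!
Conjugating every stalk by the transport `T (-q)` that moves a force-couple from its position `q`
to the origin turns the extension map `T (p v - c)` of the edge with midpoint `c` into
`T (-p v) ∘ T (p v - c) = T (-c)`, which no longer depends on the vertex: the moment cosheaf
becomes the constant one. Splitting each stalk into its three coordinates, the moment boundary is
then conjugate to three copies of the graph boundary, and conjugate maps have isomorphic kernels
and cokernels.
-/

def LinearEquiv.piComm (R α β M : Type*) [Semiring R] [AddCommMonoid M] [Module R M] :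
    (α → β → M) ≃ₗ[R] (β → α → M) where
  toFun := swap
  invFun := swap
  map_add' _ _ := rfl
  map_smul' _ _ := rfl
  left_inv _ := rfl
  right_inv _ := rfl

namespace LinearMap

section Semiring

variable {R M N M' N' : Type*} [Semiring R] [AddCommMonoid M] [Module R M]
  [AddCommMonoid N] [Module R N] [AddCommMonoid M'] [Module R M'] [AddCommMonoid N'] [Module R N']

theorem map_ker_eq_of_commSq {f : M →ₗ[R] N} {g : M' →ₗ[R] N'} (Φ : M ≃ₗ[R] M') (Ψ : N ≃ₗ[R] N')
    (h : Ψ.toLinearMap ∘ₗ f = g ∘ₗ Φ.toLinearMap) : (ker f).map Φ.toLinearMap = ker g := by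
  rw [← LinearEquiv.ker_comp Ψ f, h, ker_comp]
  exact Submodule.map_comap_eq_of_surjective Φ.surjective _

def kerEquivOfCommSq {f : M →ₗ[R] N} {g : M' →ₗ[R] N'} (Φ : M ≃ₗ[R] M') (Ψ : N ≃ₗ[R] N')
    (h : Ψ.toLinearMap ∘ₗ f = g ∘ₗ Φ.toLinearMap) : ker f ≃ₗ[R] ker g :=
  Φ.ofSubmodules _ _ (map_ker_eq_of_commSq Φ Ψ h)

variable {ι : Type*} {φ ψ : ι → Type*} [∀ i, AddCommMonoid (φ i)] [∀ i, Module R (φ i)]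
  [∀ i, AddCommMonoid (ψ i)] [∀ i, Module R (ψ i)]

def kerPiMapEquiv (f : ∀ i, φ i →ₗ[R] ψ i) : ker (piMap f) ≃ₗ[R] ∀ i, ker (f i) where
  toFun x i := ⟨x.1 i, congrFun (mem_ker.mp x.2) i⟩
  invFun y := ⟨fun i => y i, mem_ker.mpr (funext fun i => (y i).2)⟩
  map_add' _ _ := rfl
  map_smul' _ _ := rfl
  left_inv _ := rfl
  right_inv _ := rfl

end Semiring

section Ring

variable {R M N M' N' : Type*} [Ring R] [AddCommGroup M] [Module R M]
  [AddCommGroup N] [Module R N] [AddCommGroup M'] [Module R M'] [AddCommGroup N'] [Module R N']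

def cokerEquivOfCommSq {f : M →ₗ[R] N} {g : M' →ₗ[R] N'} (Φ : M ≃ₗ[R] M') (Ψ : N ≃ₗ[R] N')
    (h : Ψ.toLinearMap ∘ₗ f = g ∘ₗ Φ.toLinearMap) : (N ⧸ range f) ≃ₗ[R] (N' ⧸ range g) :=
  Submodule.Quotient.equiv _ _ Ψ <| by
    rw [← range_comp, h, range_comp_of_range_eq_top _ Φ.range]

variable {ι : Type*} {φ ψ : ι → Type*} [∀ i, AddCommGroup (φ i)] [∀ i, Module R (φ i)]
  [∀ i, AddCommGroup (ψ i)] [∀ i, Module R (ψ i)]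

theorem range_piMap (f : ∀ i, φ i →ₗ[R] ψ i) :
    range (piMap f) = Submodule.pi Set.univ fun i => range (f i) :=
  SetLike.coe_injective (Set.range_piMap _)

end Ring

section CommRing

variable {R ι : Type*} [CommRing R] {φ ψ : ι → Type*} [∀ i, AddCommGroup (φ i)]
  [∀ i, Module R (φ i)] [∀ i, AddCommGroup (ψ i)] [∀ i, Module R (ψ i)]

def cokerPiMapEquiv [Fintype ι] [DecidableEq ι] (f : ∀ i, φ i →ₗ[R] ψ i) :
    ((∀ i, ψ i) ⧸ range (piMap f)) ≃ₗ[R] ∀ i, ψ i ⧸ range (f i) :=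
  (Submodule.quotEquivOfEq _ _ (range_piMap f)).trans (Submodule.quotientPi _)

end CommRing

end LinearMap

theorem T_T (d₁ d₂ : Fin 2 → ℝ) (x : ℝ × (Fin 2 → ℝ)) : T d₁ (T d₂ x) = T (d₁ + d₂) x :=
  Prod.ext (by simp only [T, wedge, Pi.add_apply]; ring) rfl

theorem T_zero (x : ℝ × (Fin 2 → ℝ)) : T 0 x = x := by
  simp [T, wedge]

theorem T_neg_T_sub (a b : Fin 2 → ℝ) (x : ℝ × (Fin 2 → ℝ)) : T (-a) (T (a - b) x) = T (-b) x := by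
  rw [T_T, sub_eq_add_neg, neg_add_cancel_left]

def transportEquiv (d : Fin 2 → ℝ) : (ℝ × (Fin 2 → ℝ)) ≃ₗ[ℝ] ℝ × (Fin 2 → ℝ) where
  toFun := T d
  invFun := T (-d)
  map_add' x y :=
    Prod.ext (by simp only [T, wedge, Prod.fst_add, Prod.snd_add, Pi.add_apply]; ring) rfl
  map_smul' c x := Prod.ext (by simp only [T, wedge, Prod.smul_fst, Prod.smul_snd, Pi.smul_apply,
    smul_eq_mul, RingHom.id_apply]; ring) rfl
  left_inv x := by rw [T_T, neg_add_cancel, T_zero]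
  right_inv x := by rw [T_T, add_neg_cancel, T_zero]

@[simp]
theorem transportEquiv_apply (d : Fin 2 → ℝ) (x : ℝ × (Fin 2 → ℝ)) : transportEquiv d x = T d x :=
  rfl

/-- Moves the force-couple sitting at `q x` to the origin and splits it into its three
coordinates. -/
def transportToOrigin {X : Type*} (q : X → Fin 2 → ℝ) :
    (X → ℝ × (Fin 2 → ℝ)) ≃ₗ[ℝ] (Fin 3 → X → ℝ) :=
  (LinearEquiv.piCongrRight fun x =>
    (transportEquiv (-q x)).trans (Fin.consLinearEquiv ℝ fun _ : Fin 3 => ℝ)).trans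
    (LinearEquiv.piComm ℝ X (Fin 3) ℝ)

theorem transportToOrigin_apply {X : Type*} (q : X → Fin 2 → ℝ) (y : X → ℝ × (Fin 2 → ℝ))
    (i : Fin 3) (x : X) :
    transportToOrigin q y i x =
      Fin.consLinearEquiv ℝ (fun _ => ℝ) (transportEquiv (-q x) (y x)) i :=
  rfl

theorem transportToOrigin_comp_boundary {V E : Type*} [Fintype E] [DecidableEq V]
    (s t : E → V) (p : V → Fin 2 → ℝ)
    (bdM : (E → ℝ × (Fin 2 → ℝ)) →ₗ[ℝ] (V → ℝ × (Fin 2 → ℝ)))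
    (hbdM : ∀ (w : E → ℝ × (Fin 2 → ℝ)) (v : V), bdM w v =
      ∑ e, ((if t e = v then (1 : ℝ) else 0) - (if s e = v then 1 else 0))
        • T (p v - (1/2 : ℝ) • (p (s e) + p (t e))) (w e))
    (bdG : (E → ℝ) →ₗ[ℝ] (V → ℝ))
    (hbdG : ∀ (w : E → ℝ) (v : V), bdG w v =
      ∑ e, w e * ((if t e = v then (1 : ℝ) else 0) - (if s e = v then 1 else 0))) :
    (transportToOrigin p).toLinearMap ∘ₗ bdM =
      LinearMap.piMap (fun _ : Fin 3 => bdG) ∘ₗ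
        (transportToOrigin fun e => (1/2 : ℝ) • (p (s e) + p (t e))).toLinearMap := by
  ext w i v
  simp only [LinearMap.coe_comp, LinearEquiv.coe_coe, comp_apply, LinearMap.coe_piMap, Pi.map_apply]
  rw [transportToOrigin_apply, hbdM, hbdG, map_sum, map_sum, Finset.sum_apply]
  refine Finset.sum_congr rfl fun e _ => ?_
  rw [map_smul, map_smul, transportEquiv_apply, T_neg_T_sub, Pi.smul_apply, smul_eq_mul, mul_comm,
    transportToOrigin_apply, transportEquiv_apply]

theorem moment_cosheaf_iso_constant_general
    {V E : Type} [Fintype E] [DecidableEq V]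
    (s t : E → V) (p : V → Fin 2 → ℝ)
    (bdM : (E → ℝ × (Fin 2 → ℝ)) →ₗ[ℝ] (V → ℝ × (Fin 2 → ℝ)))
    (hbdM : ∀ (w : E → ℝ × (Fin 2 → ℝ)) (v : V), bdM w v =
      ∑ e, ((if t e = v then (1 : ℝ) else 0) - (if s e = v then 1 else 0))
        • T (p v - (1/2 : ℝ) • (p (s e) + p (t e))) (w e))
    (bdG : (E → ℝ) →ₗ[ℝ] (V → ℝ))
    (hbdG : ∀ (w : E → ℝ) (v : V), bdG w v =
      ∑ e, w e * ((if t e = v then (1 : ℝ) else 0) - (if s e = v then 1 else 0))) :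
    (∃ (φv : V → (ℝ × (Fin 2 → ℝ)) ≃ₗ[ℝ] (ℝ × (Fin 2 → ℝ)))
       (φe : E → (ℝ × (Fin 2 → ℝ)) ≃ₗ[ℝ] (ℝ × (Fin 2 → ℝ))),
      ∀ e : E,
        (∀ x, φv (t e) (T (p (t e) - (1/2 : ℝ) • (p (s e) + p (t e))) x) = φe e x) ∧
        (∀ x, φv (s e) (T (p (s e) - (1/2 : ℝ) • (p (s e) + p (t e))) x) = φe e x)) ∧
    Nonempty (LinearMap.ker bdM ≃ₗ[ℝ] (Fin 3 → LinearMap.ker bdG)) ∧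
    Nonempty (((V → ℝ × (Fin 2 → ℝ)) ⧸ LinearMap.range bdM) ≃ₗ[ℝ]
      (Fin 3 → ((V → ℝ) ⧸ LinearMap.range bdG))) := by
  have hconj := transportToOrigin_comp_boundary s t p bdM hbdM bdG hbdG
  refine ⟨⟨fun v => transportEquiv (-p v),
    fun e => transportEquiv (-((1/2 : ℝ) • (p (s e) + p (t e)))),
    fun e => ⟨fun x => T_neg_T_sub _ _ x, fun x => T_neg_T_sub _ _ x⟩⟩, ?_, ?_⟩
  · exact ⟨(LinearMap.kerEquivOfCommSq _ _ hconj).trans (LinearMap.kerPiMapEquiv _)⟩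
  · exact ⟨(LinearMap.cokerEquivOfCommSq _ _ hconj).trans (LinearMap.cokerPiMapEquiv _)⟩

/-- The moment cosheaf over a framework `(G, p)` in `ℝ²` is isomorphic to the constant
cosheaf with stalk `ℝ³ ≅ ⋀²ℝ² ⊕ ℝ²`: there are linear isomorphisms of the vertex and
edge stalks commuting with the extension maps `T`, hence the homology of the moment
cosheaf is three copies of the graph homology: `H₁M ≅ (H₁G)³` and `H₀M ≅ (H₀G)³`. -/
theorem moment_cosheaf_iso_constant
    {V E : Type} [Fintype V] [Fintype E] [DecidableEq V]
    (s t : E → V) (p : V → Fin 2 → ℝ)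
    (bdM : (E → ℝ × (Fin 2 → ℝ)) →ₗ[ℝ] (V → ℝ × (Fin 2 → ℝ)))
    (hbdM : ∀ (w : E → ℝ × (Fin 2 → ℝ)) (v : V), bdM w v =
      ∑ e, ((if t e = v then (1 : ℝ) else 0) - (if s e = v then 1 else 0))
        • T (p v - (1/2 : ℝ) • (p (s e) + p (t e))) (w e))
    (bdG : (E → ℝ) →ₗ[ℝ] (V → ℝ))
    (hbdG : ∀ (w : E → ℝ) (v : V), bdG w v =
      ∑ e, w e * ((if t e = v then (1 : ℝ) else 0) - (if s e = v then 1 else 0))) :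
    (∃ (φv : V → (ℝ × (Fin 2 → ℝ)) ≃ₗ[ℝ] (ℝ × (Fin 2 → ℝ)))
       (φe : E → (ℝ × (Fin 2 → ℝ)) ≃ₗ[ℝ] (ℝ × (Fin 2 → ℝ))),
      ∀ e : E,
        (∀ x, φv (t e) (T (p (t e) - (1/2 : ℝ) • (p (s e) + p (t e))) x) = φe e x) ∧
        (∀ x, φv (s e) (T (p (s e) - (1/2 : ℝ) • (p (s e) + p (t e))) x) = φe e x)) ∧
    Nonempty (LinearMap.ker bdM ≃ₗ[ℝ] (Fin 3 → LinearMap.ker bdG)) ∧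
    Nonempty (((V → ℝ × (Fin 2 → ℝ)) ⧸ LinearMap.range bdM) ≃ₗ[ℝ]
      (Fin 3 → ((V → ℝ) ⧸ LinearMap.range bdG))) :=
  moment_cosheaf_iso_constant_general s t p bdM hbdM bdG hbdG
end

section
/- For a connected framework (G,p) in ℝ², the anchored cosheaf boundary map ∂_N is surjective, i.e. H₀N = 0. -/
open Module Function

/-!
Only the moment components matter modulo `Z`, so it suffices that the moment part of `∂_M`
is onto `ℝ^V`. A pure moment on an edge `e` has boundary `δ_{t e} - δ_{s e}`; by connectivity
these span the hyperplane of functions with zero sum. A force `F` on an edge `e₀` has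
boundary of total moment `wedge F (p (t e₀) - p (s e₀))`, which is nonzero for a suitable `F`
because the edge is not degenerate. A hyperplane together with a vector outside it spans.
-/

section SingleDifferences

variable {V K : Type*} [DecidableEq V]

theorem single_sub_single_mem_of_reflTransGen [Ring K] {r : V → V → Prop}
    (W : Submodule K (V → K))
    (hr : ∀ a b, r a b → (Pi.single b 1 - Pi.single a 1 : V → K) ∈ W) {a b : V}
    (h : Relation.ReflTransGen r a b) : (Pi.single b 1 - Pi.single a 1 : V → K) ∈ W := by
  induction h with
  | refl => simp
  | @tail b c _ hbc ih =>
    simpa using W.add_mem (hr b c hbc) ih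

theorem sub_smul_single_eq_sum_smul_single_sub_single [Ring K] [Fintype V] (x : V → K)
    (v₀ : V) :
    x - (∑ v, x v) • Pi.single v₀ 1 = ∑ v, x v • (Pi.single v 1 - Pi.single v₀ 1) := by
  ext w
  simp [Finset.sum_apply, Pi.single_apply, mul_sub, Finset.sum_sub_distrib]

theorem Submodule.eq_top_of_single_sub_single_mem [Field K] [Fintype V]
    (W : Submodule K (V → K))
    (hW : ∀ a b, (Pi.single b 1 - Pi.single a 1 : V → K) ∈ W) {x : V → K} (hx : x ∈ W)
    (hsum : ∑ v, x v ≠ 0) : W = ⊤ := by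
  obtain ⟨v₀, -, -⟩ := Finset.exists_ne_zero_of_sum_ne_zero hsum
  have hv₀ : (Pi.single v₀ 1 : V → K) ∈ W := by
    have h : (∑ v, x v) • (Pi.single v₀ 1 : V → K) ∈ W := by
      have := sub_smul_single_eq_sum_smul_single_sub_single x v₀
      rw [sub_eq_iff_eq_add'] at this
      rw [← sub_eq_iff_eq_add.2 this]
      exact W.sub_mem hx (W.sum_mem fun v _ => W.smul_mem _ (hW v₀ v))
    simpa [hsum] using W.smul_mem (∑ v, x v)⁻¹ h
  have hsingle : ∀ v, (Pi.single v 1 : V → K) ∈ W := fun v => by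
    simpa using W.add_mem (hW v₀ v) hv₀
  rw [eq_top_iff, ← (Pi.basisFun K V).span_eq, Submodule.span_le]
  rintro _ ⟨v, rfl⟩
  simpa using hsingle v

theorem sum_single_sub_single_mul [Ring K] [Fintype V] (a b : V) (g : V → K) :
    ∑ v, (Pi.single b 1 - Pi.single a 1 : V → K) v * g v = g b - g a := by
  simp [sub_mul, Finset.sum_sub_distrib, Pi.single_apply]

end SingleDifferences

theorem exists_wedge_ne_zero {d : Fin 2 → ℝ} (hd : d ≠ 0) : ∃ F, wedge F d ≠ 0 := by
  by_contra! h
  refine hd (funext fun i => ?_)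
  fin_cases i
  · simpa [wedge] using h (Pi.single 1 1)
  · simpa [wedge] using h (Pi.single 0 1)

theorem wedge_sub_sub_sub (F a b c : Fin 2 → ℝ) :
    wedge F (a - c) - wedge F (b - c) = wedge F (a - b) := by
  simp only [wedge, Pi.sub_apply]
  ring

theorem fst_sum_incidence_smul_T_single {V E : Type*} [Fintype E] [DecidableEq V]
    [DecidableEq E] (s t : E → V) (d : E → Fin 2 → ℝ) (e : E) (x : ℝ × (Fin 2 → ℝ))
    (v : V) :
    (∑ e', ((if t e' = v then (1 : ℝ) else 0) - (if s e' = v then 1 else 0))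
        • T (d e') ((Pi.single e x : E → ℝ × (Fin 2 → ℝ)) e')).1 =
      (Pi.single (t e) 1 - Pi.single (s e) 1 : V → ℝ) v * (x.1 + wedge x.2 (d e)) := by
  rw [Finset.sum_eq_single e (fun e' _ he' => by simp [he', T, wedge]) (by simp)]
  simp [T, Pi.single_apply, eq_comm]

theorem anchored_boundary_surjective_general
    {V E : Type} [Fintype V] [Fintype E] [DecidableEq V] [Nonempty E]
    (s t : E → V) (p : V → Fin 2 → ℝ)
    (hconn : ∀ a b : V, Relation.ReflTransGen
      (fun a b => ∃ e, (s e = a ∧ t e = b) ∨ (s e = b ∧ t e = a)) a b)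
    (hreal : ∀ e : E, p (s e) ≠ p (t e))
    (bdM : (E → ℝ × (Fin 2 → ℝ)) →ₗ[ℝ] (V → ℝ × (Fin 2 → ℝ)))
    (hbdM : ∀ (w : E → ℝ × (Fin 2 → ℝ)) (v : V), bdM w v =
      ∑ e, ((if t e = v then (1 : ℝ) else 0) - (if s e = v then 1 else 0))
        • T (p v - (1/2 : ℝ) • (p (s e) + p (t e))) (w e))
    (Z : Submodule ℝ (V → ℝ × (Fin 2 → ℝ)))
    (hZ : ∀ x : V → ℝ × (Fin 2 → ℝ), x ∈ Z ↔ ∀ v : V, (x v).1 = 0) :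
    Surjective (Z.mkQ ∘ₗ bdM) := by
  classical
  let moment : (V → ℝ × (Fin 2 → ℝ)) →ₗ[ℝ] V → ℝ :=
    LinearMap.pi fun v => LinearMap.fst ℝ ℝ (Fin 2 → ℝ) ∘ₗ LinearMap.proj v
  have hmoment : ∀ e x v, moment (bdM (Pi.single e x)) v =
      (Pi.single (t e) 1 - Pi.single (s e) 1 : V → ℝ) v *
        (x.1 + wedge x.2 (p v - (1/2 : ℝ) • (p (s e) + p (t e)))) := fun e x v => by
    simp only [moment, LinearMap.pi_apply, LinearMap.comp_apply, LinearMap.proj_apply,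
      LinearMap.fst_apply, hbdM]
    exact fst_sum_incidence_smul_T_single s t
      (fun e => p v - (1/2 : ℝ) • (p (s e) + p (t e))) e x v
  obtain ⟨e₀⟩ := ‹Nonempty E›
  obtain ⟨F, hF⟩ := exists_wedge_ne_zero (sub_ne_zero.2 (hreal e₀).symm)
  have hrange : LinearMap.range (moment ∘ₗ bdM) = ⊤ := by
    refine Submodule.eq_top_of_single_sub_single_mem _
      (fun a b => single_sub_single_mem_of_reflTransGen _ ?_ (hconn a b))
      (LinearMap.mem_range_self _ (Pi.single e₀ (0, F))) ?_
    · rintro a b ⟨e, ⟨rfl, rfl⟩ | ⟨rfl, rfl⟩⟩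
      · exact ⟨Pi.single e (1, 0), funext fun v => by simp [hmoment, wedge]⟩
      · exact ⟨Pi.single e (-1, 0), funext fun v => by simp [hmoment, wedge]⟩
    · simp only [LinearMap.comp_apply, hmoment, zero_add]
      rwa [sum_single_sub_single_mul, wedge_sub_sub_sub]
  intro y
  obtain ⟨y, rfl⟩ := Z.mkQ_surjective y
  obtain ⟨w, hw⟩ := LinearMap.range_eq_top.1 hrange (moment y)
  refine ⟨w, (Submodule.Quotient.eq Z).2 ((hZ _).2 fun v => ?_)⟩
  simpa [moment, sub_eq_zero] using congr_fun hw v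

/-- For a connected framework `(G, p)` in `ℝ²` with at least one edge, the anchored
cosheaf boundary map is surjective, i.e. `H₀N = 0`.  The anchored cosheaf is the
quotient of the moment cosheaf by the axial force cosheaf, so its zeroth homology
vanishes iff the composite of `bdM` with the quotient by the subspace `Z` of pure
nodal forces (zero moment component at every vertex) is surjective. -/
theorem anchored_boundary_surjective
    {V E : Type} [Fintype V] [Fintype E] [DecidableEq V] [Nonempty V] [Nonempty E]
    (s t : E → V) (p : V → Fin 2 → ℝ)
    (hconn : ∀ a b : V, Relation.ReflTransGen
      (fun a b => ∃ e, (s e = a ∧ t e = b) ∨ (s e = b ∧ t e = a)) a b)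
    (hreal : ∀ e : E, p (s e) ≠ p (t e))
    (bdM : (E → ℝ × (Fin 2 → ℝ)) →ₗ[ℝ] (V → ℝ × (Fin 2 → ℝ)))
    (hbdM : ∀ (w : E → ℝ × (Fin 2 → ℝ)) (v : V), bdM w v =
      ∑ e, ((if t e = v then (1 : ℝ) else 0) - (if s e = v then 1 else 0))
        • T (p v - (1/2 : ℝ) • (p (s e) + p (t e))) (w e))
    (Z : Submodule ℝ (V → ℝ × (Fin 2 → ℝ)))
    (hZ : ∀ x : V → ℝ × (Fin 2 → ℝ), x ∈ Z ↔ ∀ v : V, (x v).1 = 0) :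
    Surjective (Z.mkQ ∘ₗ bdM) :=
  anchored_boundary_surjective_general s t p hconn hreal bdM hbdM Z hZ
end
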